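/- arXiv:1009.1291 — 7 statements merged into one kernel-verified Lean document; each statement's English description precedes it below -/
import Mathlib

section
/- For nonnegative integers a_0, a_1, ..., a_n, the constant term in x_0, ..., x_n of the Dyson product ∏_{0 ≤ i ≠ j ≤ n} (1 - x_i/x_j)^{a_i} equals the multinomial coefficient a!/(a_0! a_1! ⋯ a_n!), where a = a_0 + a_1 + ⋯ + a_n. -/
/-!
Good's proof. Put `G_k = ∏_{i ≠ k} (1 - x_k / x_i)`, so that the Dyson product on a set `S` of
variables is `∏_{k ∈ S} G_k ^ a_k`. Lagrange interpolation of the constant `1` at the nodes `x_i`,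
evaluated at `0`, gives `∑_j 1 / G_j = 1`; hence the Dyson product with exponents `a` is the sum of
those with exponents `a - e_j`, and its constant term satisfies the Pascal recurrence of the
multinomial coefficients as long as all `a_j` are positive. A variable `x_j` with `a_j = 0` can be
dropped: it contributes only the factors `(1 - x_k / x_j) ^ a_k`, which are `1` plus monomials of
negative degree in `x_j` and so cannot reach the constant term.
-/

open Finsupp
noncomputable section
abbrev Lau (n : ℕ) := AddMonoidAlgebra ℚ (Fin (n+1) →₀ ℤ)
def mono {n : ℕ} (e : Fin (n+1) →₀ ℤ) : Lau n := AddMonoidAlgebra.single e 1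
def CT {n : ℕ} (f : Lau n) : ℚ := f.coeff 0
def Dyson (n : ℕ) (a : Fin (n+1) → ℕ) : Lau n :=
  ∏ p ∈ Finset.univ.filter (fun p : Fin (n+1) × Fin (n+1) => p.1 ≠ p.2),
    (1 - mono (single p.1 1 - single p.2 1)) ^ (a p.1)

open Finset Pointwise

section Lagrange
variable {ι F : Type*} [DecidableEq ι] [Field F] {s : Finset ι} {v : ι → F}

theorem sum_prod_erase_div_sub_eq_one (hv : Set.InjOn v s) (hs : s.Nonempty) :
    ∑ j ∈ s, ∏ i ∈ s.erase j, v i / (v i - v j) = 1 := by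
  have := congrArg (Polynomial.eval 0) (Lagrange.sum_basis hv hs)
  simp only [Polynomial.eval_finsetSum, Polynomial.eval_one, Lagrange.basis, Polynomial.eval_prod,
    Lagrange.basisDivisor, Polynomial.eval_mul, Polynomial.eval_C, Polynomial.eval_sub,
    Polynomial.eval_X, zero_sub] at this
  rw [← this]
  refine sum_congr rfl fun j _ => prod_congr rfl fun i _ => ?_
  rw [← neg_sub (v j), div_neg, mul_neg, div_eq_inv_mul]

theorem sum_prod_erase_prod_one_sub_div (hv : Set.InjOn v s) (hv0 : ∀ i ∈ s, v i ≠ 0)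
    (hs : s.Nonempty) :
    ∑ j ∈ s, ∏ k ∈ s.erase j, ∏ i ∈ s.erase k, (1 - v k / v i) =
      ∏ k ∈ s, ∏ i ∈ s.erase k, (1 - v k / v i) := by
  set G := fun k => ∏ i ∈ s.erase k, (1 - v k / v i)
  have hsub : ∀ j ∈ s, ∀ i ∈ s.erase j, v i - v j ≠ 0 := fun j hj i hi =>
    sub_ne_zero.2 fun h => (mem_erase.1 hi).1 (hv (mem_erase.1 hi).2 hj h)
  have hG0 : ∀ j ∈ s, G j ≠ 0 := fun j hj => prod_ne_zero_iff.2 fun i hi => by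
    rw [one_sub_div (hv0 i (mem_erase.1 hi).2)]
    exact div_ne_zero (hsub j hj i hi) (hv0 i (mem_erase.1 hi).2)
  have hG_inv : ∀ j ∈ s, (G j)⁻¹ = ∏ i ∈ s.erase j, v i / (v i - v j) := by
    intro j hj
    rw [← prod_inv_distrib]
    refine prod_congr rfl fun i hi => ?_
    rw [one_sub_div (hv0 i (mem_erase.1 hi).2), inv_div]
  calc ∑ j ∈ s, ∏ k ∈ s.erase j, G k
      = ∑ j ∈ s, (∏ k ∈ s, G k) * (G j)⁻¹ := by
        refine sum_congr rfl fun j hj => ?_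
        rw [← prod_erase_mul s G hj, mul_inv_cancel_right₀ (hG0 j hj)]
    _ = ∏ k ∈ s, G k := by
        rw [← Finset.mul_sum, sum_congr rfl hG_inv, sum_prod_erase_div_sub_eq_one hv hs, mul_one]

end Lagrange

namespace AddMonoidAlgebra
variable {k G : Type*} [Ring k]

theorem single_mem_supported {s : Set G} {d : G} (hd : d ∈ s) (r : k) :
    single d r ∈ supported k k s := by
  intro e he
  rwa [Finset.mem_singleton.1 (Finsupp.support_single_subset he)]

variable [AddCommMonoid G]

theorem mul_mem_supported {s t u : Set G} (hstu : s + t ⊆ u) {f g : k[G]}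
    (hf : f ∈ supported k k s) (hg : g ∈ supported k k t) : f * g ∈ supported k k u := by
  classical
  intro e he
  obtain ⟨b, hb, c, hc, rfl⟩ := Finset.mem_add.1 (support_coeff_mul_subset f g he)
  exact hstu (Set.add_mem_add (hf hb) (hg hc))

theorem one_mem_supported {s : Set G} (hs : 0 ∈ s) : (1 : k[G]) ∈ supported k k s :=
  single_mem_supported hs 1

variable (k) (φ : G →+ ℤ)

def nonposWeight : Submonoid k[G] where
  carrier := supported k k (φ ⁻¹' Set.Iic 0)
  one_mem' := one_mem_supported (by simp)
  mul_mem' := mul_mem_supported <| Set.add_subset_iff.2 fun a ha b hb => by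
    simp only [Set.mem_preimage, Set.mem_Iic, map_add] at *
    omega

def oneAddNegWeight : Submonoid k[G] where
  carrier := {f | f - 1 ∈ supported k k (φ ⁻¹' Set.Iio 0)}
  one_mem' := by simp
  mul_mem' {f g} hf hg := by
    have hN : φ ⁻¹' Set.Iio 0 + φ ⁻¹' Set.Iio 0 ⊆ φ ⁻¹' Set.Iio 0 :=
      Set.add_subset_iff.2 fun a ha b hb => by
        simp only [Set.mem_preimage, Set.mem_Iio, map_add] at *
        omega
    rw [Set.mem_ofPred_eq, show f * g - 1 = (f - 1) * (g - 1) + (f - 1) + (g - 1) by noncomm_ring]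
    exact add_mem (add_mem (mul_mem_supported hN hf hg) hf) hg

variable {k φ}

theorem one_sub_single_mem_nonposWeight {d : G} (hd : φ d ≤ 0) (r : k) :
    1 - single d r ∈ nonposWeight k φ :=
  show _ ∈ supported k k (φ ⁻¹' Set.Iic 0) from
    sub_mem (one_mem_supported (by simp)) (single_mem_supported (s := φ ⁻¹' Set.Iic 0) hd r)

theorem one_sub_single_mem_oneAddNegWeight {d : G} (hd : φ d < 0) (r : k) :
    1 - single d r ∈ oneAddNegWeight k φ := by
  change 1 - single d r - 1 ∈ supported k k (φ ⁻¹' Set.Iio 0)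
  rw [sub_sub_cancel_left]
  exact neg_mem (single_mem_supported (s := φ ⁻¹' Set.Iio 0) hd r)

theorem coeff_zero_mul_of_mem_nonposWeight {f g : k[G]} (hf : f ∈ nonposWeight k φ)
    (hg : g ∈ oneAddNegWeight k φ) : (f * g).coeff 0 = f.coeff 0 := by
  have hfg : f * (g - 1) ∈ supported k k (φ ⁻¹' Set.Iio 0) :=
    mul_mem_supported (Set.add_subset_iff.2 fun a ha b hb => by
      simp only [Set.mem_preimage, Set.mem_Iic, Set.mem_Iio, map_add] at *
      omega) hf hg
  rw [show f * g = f + f * (g - 1) by noncomm_ring, coeff_add, Finsupp.add_apply,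
    mem_supported'.1 hfg 0 (by simp), add_zero]

end AddMonoidAlgebra

theorem Finset.prod_pow_eq_sum_prod_pow_update_pred {ι R : Type*} [DecidableEq ι]
    [CommSemiring R] {s : Finset ι} {G : ι → R}
    (hG : ∑ j ∈ s, ∏ k ∈ s.erase j, G k = ∏ k ∈ s, G k) {a : ι → ℕ} (ha : ∀ i ∈ s, a i ≠ 0) :
    ∏ k ∈ s, G k ^ a k = ∑ j ∈ s, ∏ k ∈ s, G k ^ Function.update a j (a j - 1) k := by
  have hpow : ∀ k ∈ s, G k ^ a k = G k ^ (a k - 1) * G k := fun k hk => by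
    rw [← pow_succ, Nat.sub_add_cancel (Nat.one_le_iff_ne_zero.2 (ha k hk))]
  rw [prod_congr rfl hpow, prod_mul_distrib, ← hG, Finset.mul_sum]
  refine sum_congr rfl fun j hj => ?_
  rw [← mul_prod_erase s _ hj, ← mul_prod_erase s _ hj, Function.update_self, mul_assoc,
    ← prod_mul_distrib]
  congr 1
  refine prod_congr rfl fun k hk => ?_
  rw [Function.update_of_ne (mem_erase.1 hk).1, ← hpow k (mem_erase.1 hk).2]

open Nat in
theorem Nat.sum_multinomial_update_pred {α : Type*} [DecidableEq α] {s : Finset α}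
    (hs : s.Nonempty) {f : α → ℕ} (hf : ∀ i ∈ s, f i ≠ 0) :
    ∑ j ∈ s, multinomial s (Function.update f j (f j - 1)) = multinomial s f := by
  have hP : ∏ i ∈ s, (f i)! ≠ 0 := prod_ne_zero_iff.2 fun i _ => factorial_ne_zero _
  have hterm : ∀ j ∈ s, (∏ i ∈ s, (f i)!) * multinomial s (Function.update f j (f j - 1)) =
      f j * (∑ i ∈ s, f i - 1)! := by
    intro j hj
    set g := Function.update f j (f j - 1)
    have hprod : ∏ i ∈ s, (f i)! = f j * ∏ i ∈ s, (g i)! := by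
      rw [prod_congr rfl fun i _ => Function.apply_update (fun _ n => n !) f j (f j - 1) i,
        prod_update_of_mem hj, prod_eq_mul_prod_sdiff_singleton_of_mem hj, ← mul_assoc,
        mul_factorial_pred (hf j hj)]
    have hsum : ∑ i ∈ s, g i = ∑ i ∈ s, f i - 1 := by
      rw [sum_update_of_mem hj, sum_eq_add_sum_sdiff_singleton_of_mem hj f]
      have := hf j hj
      omega
    rw [hprod, mul_assoc, multinomial_spec, hsum]
  have hpos : 0 < ∑ i ∈ s, f i := by
    obtain ⟨i, hi⟩ := hs
    exact (Nat.pos_of_ne_zero (hf i hi)).trans_le (single_le_sum (fun _ _ => Nat.zero_le _) hi)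
  rw [← Nat.mul_right_inj hP, Finset.mul_sum, sum_congr rfl hterm, ← Finset.sum_mul,
    multinomial_spec, mul_factorial_pred hpos.ne']

section Laurent
open AddMonoidAlgebra (nonposWeight oneAddNegWeight one_sub_single_mem_nonposWeight
  one_sub_single_mem_oneAddNegWeight coeff_zero_mul_of_mem_nonposWeight)

variable {n : ℕ}

theorem mono_add (e e' : Fin (n+1) →₀ ℤ) : mono (e + e') = mono e * mono e' := by
  simp [mono, AddMonoidAlgebra.single_mul_single]

theorem CT_one : CT (1 : Lau n) = 1 := AddMonoidAlgebra.coeff_one_zero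

theorem CT_sum {α : Type*} (s : Finset α) (f : α → Lau n) :
    CT (∑ i ∈ s, f i) = ∑ i ∈ s, CT (f i) := by
  simp [CT, AddMonoidAlgebra.coeff_sum, Finsupp.finsetSum_apply]

def dysonFactor (S : Finset (Fin (n+1))) (k : Fin (n+1)) : Lau n :=
  ∏ i ∈ S.erase k, (1 - mono (single k 1 - single i 1))

def dysonOn (S : Finset (Fin (n+1))) (a : Fin (n+1) → ℕ) : Lau n :=
  ∏ k ∈ S, dysonFactor S k ^ a k

theorem dyson_eq_dysonOn_univ (a : Fin (n+1) → ℕ) : Dyson n a = dysonOn univ a := by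
  rw [Dyson, dysonOn, ← univ_product_univ, prod_filter, prod_product]
  refine prod_congr rfl fun k _ => ?_
  rw [dysonFactor, ← Finset.prod_pow, ← filter_ne, prod_filter]

/- `Lau n` is a domain (its exponent group has unique sums), so the identity may be checked in the
fraction field, where it is `sum_prod_erase_prod_one_sub_div`. -/
theorem sum_prod_erase_dysonFactor {S : Finset (Fin (n+1))} (hS : S.Nonempty) :
    ∑ j ∈ S, ∏ k ∈ S.erase j, dysonFactor S k = ∏ k ∈ S, dysonFactor S k := by
  let v : Fin (n+1) → FractionRing (Lau n) := fun i => algebraMap _ _ (mono (single i 1))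
  have hv0 : ∀ i, v i ≠ 0 := fun i => by simp [v, mono]
  have hv : Set.InjOn v S := fun i _ j _ h => Finsupp.single_left_injective one_ne_zero
    (AddMonoidAlgebra.single_left_injective one_ne_zero (IsFractionRing.injective (Lau n) _ h))
  have hratio : ∀ k i, algebraMap _ (FractionRing (Lau n)) (mono (single k 1 - single i 1)) =
      v k / v i := by
    intro k i
    rw [eq_div_iff (hv0 i), ← map_mul, ← mono_add, sub_add_cancel]
  apply IsFractionRing.injective (Lau n) (FractionRing (Lau n))
  simp only [map_sum, map_prod, map_sub, map_one, dysonFactor, hratio]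
  exact sum_prod_erase_prod_one_sub_div hv (fun i _ => hv0 i) hS

theorem dysonOn_eq_sum_update_pred {S : Finset (Fin (n+1))} (hS : S.Nonempty)
    {a : Fin (n+1) → ℕ} (ha : ∀ i ∈ S, a i ≠ 0) :
    dysonOn S a = ∑ j ∈ S, dysonOn S (Function.update a j (a j - 1)) :=
  prod_pow_eq_sum_prod_pow_update_pred (sum_prod_erase_dysonFactor hS) ha

theorem dysonOn_eq_mul_of_subset {S' S : Finset (Fin (n+1))} (hS : S' ⊆ S) {a : Fin (n+1) → ℕ}
    (ha : ∀ i ∈ S \ S', a i = 0) :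
    dysonOn S a = dysonOn S' a * ∏ k ∈ S',
      (∏ i ∈ S.erase k \ S'.erase k, (1 - mono (single k 1 - single i 1))) ^ a k := by
  rw [dysonOn, ← prod_subset hS fun k hk hk' => by rw [ha k (mem_sdiff.2 ⟨hk, hk'⟩), pow_zero],
    dysonOn, ← prod_mul_distrib]
  refine prod_congr rfl fun k hk => ?_
  rw [← mul_pow, dysonFactor, dysonFactor, mul_comm, prod_sdiff (erase_subset_erase k hS)]

/- With `φ e = ∑_{i ∈ S \ S'} e i`, every factor of `dysonOn S' a` has weight `0`, while each
factor `1 - x_k / x_i` with `k ∈ S'`, `i ∉ S'` is `1` plus a monomial of weight `-1`. -/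
theorem CT_dysonOn_of_subset {S' S : Finset (Fin (n+1))} (hS : S' ⊆ S) {a : Fin (n+1) → ℕ}
    (ha : ∀ i ∈ S \ S', a i = 0) : CT (dysonOn S a) = CT (dysonOn S' a) := by
  let φ : (Fin (n+1) →₀ ℤ) →+ ℤ := ∑ i ∈ S \ S', Finsupp.applyAddHom i
  have hφ : ∀ k i, φ (single k 1 - single i 1) =
      (if k ∈ S \ S' then 1 else 0) - (if i ∈ S \ S' then 1 else 0) := by
    intro k i
    simp [φ, Finsupp.single_apply, Finset.sum_ite_eq]
  have hfree : ∀ k ∈ S', ∀ i ∈ S', 1 - mono (single k 1 - single i 1) ∈ nonposWeight ℚ φ :=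
    fun k hk i hi => one_sub_single_mem_nonposWeight (by simp [hφ, hk, hi]) 1
  have hneg : ∀ k ∈ S', ∀ i ∈ S \ S', 1 - mono (single k 1 - single i 1) ∈ oneAddNegWeight ℚ φ :=
    fun k hk i hi => one_sub_single_mem_oneAddNegWeight (by simp [hφ, hk, hi]) 1
  have hD : dysonOn S' a ∈ nonposWeight ℚ φ := by
    unfold dysonOn dysonFactor
    exact prod_mem fun k hk => pow_mem (prod_mem fun i hi => hfree k hk i (mem_of_mem_erase hi)) _
  have hB : ∏ k ∈ S', (∏ i ∈ S.erase k \ S'.erase k, (1 - mono (single k 1 - single i 1))) ^ a k ∈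
      oneAddNegWeight ℚ φ := by
    refine prod_mem fun k hk => pow_mem (prod_mem fun i hi => hneg k hk i ?_) _
    simp only [mem_sdiff, mem_erase, not_and] at hi ⊢
    exact ⟨hi.1.2, fun h => hi.2 hi.1.1 h⟩
  rw [dysonOn_eq_mul_of_subset hS ha, CT, coeff_zero_mul_of_mem_nonposWeight hD hB, CT]

theorem CT_dysonOn (S : Finset (Fin (n+1))) (a : Fin (n+1) → ℕ) :
    CT (dysonOn S a) = Nat.multinomial S a := by
  induction h : ∑ i ∈ S, a i using Nat.strong_induction_on generalizing S a with
  | _ m ih =>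
  set S' := S.filter (a · ≠ 0)
  have hS' : S' ⊆ S := filter_subset _ _
  have ha : ∀ i ∈ S \ S', a i = 0 := fun i hi => by
    simp only [S', mem_sdiff, mem_filter, not_and, not_not] at hi
    exact hi.2 hi.1
  rw [CT_dysonOn_of_subset hS' ha, ← Nat.multinomial_congr_of_sdiff hS' ha (fun _ _ => rfl)]
  rcases S'.eq_empty_or_nonempty with hempty | hne
  · simp [hempty, dysonOn, CT_one]
  have ha' : ∀ i ∈ S', a i ≠ 0 := fun i hi => (mem_filter.1 hi).2
  rw [dysonOn_eq_sum_update_pred hne ha', CT_sum, ← Nat.sum_multinomial_update_pred hne ha',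
    Nat.cast_sum]
  refine sum_congr rfl fun j hj => ih _ ?_ _ _ rfl
  have hm : ∑ i ∈ S', a i = m := by rw [← h, sum_filter_ne_zero]
  rw [← hm, sum_update_of_mem hj, sum_eq_add_sum_sdiff_singleton_of_mem hj]
  have := ha' j hj
  omega

end Laurent

theorem dyson_conjecture (n : ℕ) (a : Fin (n+1) → ℕ) :
    CT (Dyson n a) =
      (Nat.factorial (∑ k, a k) : ℚ) / ∏ k, (Nat.factorial (a k) : ℚ) := by
  rw [dyson_eq_dysonOn_univ, CT_dysonOn, eq_div_iff (by positivity), mul_comm]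
  exact_mod_cast Nat.multinomial_spec univ a
end
end

section
/- Let n ≥ 2 and let a(s,k) be elements of a commutative ring for 1 ≤ s, k ≤ n with s ≠ k. Then every term in the expansion of the product ∏_{s=1}^{n} ( Σ_{k ≠ s} a(s,k) ) contains a factor a(k,r)·a(s,l) for some indices satisfying 1 ≤ r ≤ s < k ≤ l ≤ n. Equivalently: for every function f : {1,...,n} → {1,...,n} with f(s) ≠ s for all s, there exist indices r, s, k, l with 1 ≤ r ≤ s < k ≤ l ≤ n such that f(k) = r and f(s) = l. -/
/-!
Take `k` minimal with `f k < k`, and let `s` be the element just below `k`, so that `f k ≤ s`.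
By minimality `f s` is not below `s`, hence above it, and then at least `k`.
-/

theorem exists_crossing_of_lt_self {α : Type*} [LinearOrder α] [WellFoundedLT α]
    [WellFoundedGT α] {f : α → α} (hf : ∀ s, f s ≠ s) {k₀ : α} (hk₀ : f k₀ < k₀) :
    ∃ r s k l : α, r ≤ s ∧ s < k ∧ k ≤ l ∧ f k = r ∧ f s = l := by
  obtain ⟨k, hk, hmin⟩ := wellFounded_lt.has_min {x | f x < x} ⟨k₀, hk₀⟩
  obtain ⟨s, hks, hsk⟩ := exists_le_covBy_of_lt hk
  have hs : s < f s := (hf s).lt_or_gt.resolve_left fun h => hmin s h hsk.lt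
  exact ⟨f k, s, k, f s, hks, hsk.lt, hsk.ge_of_gt hs, rfl, rfl⟩

/-- Lemma 4.2 of the paper: for any fixed-point-free choice function
`f : {1,…,n} → {1,…,n}` (so each term `∏_s a(s, f(s))` of the expansion of
`∏_{s=1}^n ∑_{k ≠ s} a(s,k)` has the factor `a(k,r)·a(s,l)`),
there exist `r ≤ s < k ≤ l` with `f k = r` and `f s = l`. -/
theorem crossing_pair_of_fixed_point_free (n : ℕ) (hn : 2 ≤ n)
    (f : Fin n → Fin n) (hf : ∀ s, f s ≠ s) :
    ∃ r s k l : Fin n, r ≤ s ∧ s < k ∧ k ≤ l ∧ f k = r ∧ f s = l := by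
  obtain ⟨m, rfl⟩ : ∃ m, n = m + 1 := ⟨n - 1, by omega⟩
  exact exists_crossing_of_lt_self hf (le_top.lt_of_ne (hf ⊤))
end

section
/- For every function f : Fin n → Fin n (n ≥ 2) with f(s) ≠ s for all s, there exist s < k such that f(k) ≤ s and f(s) ≥ k. -/
/-!
Among the points `s` with `s < f s` (the least element is one, as it is not fixed), take the
largest one and let `k` be its successor. Then `k ≤ f s`, while `k` no longer moves up, so
`f k < k` and hence `f k ≤ s`.
-/

variable {α : Type*} [LinearOrder α] [Finite α]

theorem exists_lt_apply_of_forall_apply_ne [Nonempty α] {f : α → α} (hf : ∀ x, f x ≠ x) :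
    ∃ x, x < f x := by
  obtain ⟨a, ha⟩ := Finite.exists_min (id : α → α)
  exact ⟨a, (ha (f a)).lt_of_ne (hf a).symm⟩

theorem exists_crossing_pair_of_forall_apply_ne [SuccOrder α] [Nonempty α] {f : α → α}
    (hf : ∀ x, f x ≠ x) : ∃ s k, s < k ∧ f k ≤ s ∧ k ≤ f s := by
  obtain ⟨s, hs_up, hs_max⟩ :=
    Set.exists_max_image {x | x < f x} id (Set.toFinite _) (exists_lt_apply_of_forall_apply_ne hf)
  have hs_lt : s < Order.succ s := Order.lt_succ_of_not_isMax (not_isMax_of_lt hs_up)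
  have hk_down : f (Order.succ s) < Order.succ s :=
    (not_lt.mp fun h => (hs_max _ h).not_gt hs_lt).lt_of_ne (hf _)
  exact ⟨s, Order.succ s, hs_lt, Order.le_of_lt_succ hk_down, Order.succ_le_of_lt hs_up⟩

/-- Any fixed-point-free self-map of `Fin n` (`n ≥ 2`) has a crossing pair
`s < k` with `f k ≤ s` and `f s ≥ k`. -/
theorem crossing_pair (n : ℕ) (hn : 2 ≤ n) (f : Fin n → Fin n)
    (hf : ∀ s, f s ≠ s) :
    ∃ s k : Fin n, s < k ∧ f k ≤ s ∧ k ≤ f s :=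
  have : Nonempty (Fin n) := ⟨⟨0, by omega⟩⟩
  exists_crossing_pair_of_forall_apply_ne hf
end

section
/- With notation as in the extended first-layer theorem, for subsets U ⊆ I_l with i_{t_s} ∈ I_l but i_{t_s} ∉ U ∪ {i_v} (where i_v = min I_l, I \ U = {i_{t_1},...,i_{t_{m-d}}} with t_1 < ⋯ < t_{m-d}, d = |U|), we have C(I_l) + L*(U | I_l) - C(I_l \ {i_{t_s}}) - L*(U | I_l \ {i_{t_s}}) = -Σ_{k=v}^{s-1} χ(i_{t_k} > j_{t_s} > i_v) a_{i_{t_k}} + Σ_{k=s+1}^{m-d} (1 - χ(i_{t_k} > j_{t_s} > i_v)) a_{i_{t_k}}. -/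
open Finsupp
noncomputable section
variable {n m : ℕ}

/-- `min {i_l : l ∈ S}` (with junk value `0` for `S = ∅`). -/
def imin (i : Fin m → Fin (n+1)) (S : Finset (Fin m)) : Fin (n+1) := S.inf i
/-- `t`: the number of paired `j`'s lying below `min {i_l : l ∈ S}`. -/
def tS (i j : Fin m → Fin (n+1)) (S : Finset (Fin m)) : ℕ :=
  (S.filter fun l => j l < imin i S).card
/-- `N(k, I_S)` -/
def NI (i : Fin m → Fin (n+1)) (S : Finset (Fin m)) (k : Fin (n+1)) : ℕ :=
  (S.filter fun l => i l ≤ k).card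
/-- `N(k, J⁺_S)` -/
def NJp (i j : Fin m → Fin (n+1)) (S : Finset (Fin m)) (k : Fin (n+1)) : ℕ :=
  (S.filter fun l => imin i S < j l ∧ j l ≤ k).card
/-- `N(k, J⁻_S)` -/
def NJm (i j : Fin m → Fin (n+1)) (S : Finset (Fin m)) (k : Fin (n+1)) : ℕ :=
  (S.filter fun l => j l < imin i S ∧ j l ≤ k).card
/-- `w_k`: equals `a_k` for `k ∉ T`, `0` for `k ∈ T` (as subsets of `{0,…,n}`). -/
def wgt (i : Fin m → Fin (n+1)) (a : Fin (n+1) → ℕ) (T : Finset (Fin m))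
    (k : Fin (n+1)) : ℤ :=
  if k ∈ T.image i then 0 else (a k : ℤ)
/-- `L*(T | I_S)` of the extended first-layer formula (eq. (6)),
for the pair `(I_S, J_S)` indexed by `S` and a subset `T ⊆ S`. -/
def Lstar (i j : Fin m → Fin (n+1)) (a : Fin (n+1) → ℕ)
    (S T : Finset (Fin m)) : ℤ :=
  (tS i j S : ℤ)
  + ∑ k ∈ Finset.univ.filter (fun k => imin i S ≤ k),
      ((NI i S k : ℤ) - (NJp i j S k : ℤ)) * wgt i a T k
  + ∑ k ∈ Finset.univ.filter (fun k => k < imin i S),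
      ((tS i j S : ℤ) - (NJm i j S k : ℤ)) * (a k : ℤ)
/-- `min 𝕀_k` for the chain (11): `𝕀` corresponding to `r ∈ Sᶜ` is
`I_S ∪ {i_{r'} : r' ∈ Sᶜ, r' ≥ r}`. -/
def mink (i : Fin m → Fin (n+1)) (S : Finset (Fin m)) (r : Fin m) : Fin (n+1) :=
  imin i (S ∪ Sᶜ.filter fun r' => r ≤ r')
/-- `C(I_S)` of equation (12). -/
def Cfun (i j : Fin m → Fin (n+1)) (a : Fin (n+1) → ℕ) (S : Finset (Fin m)) : ℤ :=
  1 + (∑ k, (a k : ℤ)) - (∑ l ∈ S, (a (i l) : ℤ))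
  + ∑ r ∈ Sᶜ, ((NI i S (i r) : ℤ) -
      (((insert r S).filter fun l => mink i S r < j l ∧ j l ≤ i r).card : ℤ))
      * (a (i r) : ℤ)
  - Lstar i j a S S
/-- `g(i_{t_s})` of Lemma 4.1, indexed by the element `p = t_s` of the
complement of `U`; `v` is the index of `i_v = min I_l`. -/
def gfun (i j : Fin m → Fin (n+1)) (a : Fin (n+1) → ℕ) (U : Finset (Fin m))
    (v p : Fin m) : ℤ :=
  - (∑ p' ∈ Uᶜ.filter fun p' => v ≤ p' ∧ p' < p,
      if i v < j p ∧ j p < i p' then (a (i p') : ℤ) else 0)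
  + ∑ p' ∈ Uᶜ.filter fun p' => p < p',
      (1 - if i v < j p ∧ j p < i p' then 1 else 0) * (a (i p') : ℤ)

/-!
Adding `L*(U | I_l)` to `C(I_l)` cancels the term `t` and the sum below `min I_l` of
`L*(I_l | I_l)`, so
`C(I_l) + L*(U | I_l) = 1 + ∑ a_k - ∑_{u ∈ U} a_{i_u} + ∑_{r ∉ U} c_r a_{i_r}`
with `c_r = #{l ∈ I_l : l < r} - #{l ∈ I_l ∪ {r} : min(i_v, i_r) < j_l ≤ i_r}`.
Deleting `t_s` from `I_l` leaves `c_{t_s}` unchanged and lowers every other `c_r` by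
`χ(t_s < r) - χ(min(i_v, i_r) < j_{t_s} ≤ i_r)`, which is the coefficient of `a_{i_r}` on the
right-hand side.
-/

lemma card_filter_insert_of_notMem {α : Type*} [DecidableEq α] (P : α → Prop) [DecidablePred P]
    {a : α} {s : Finset α} (ha : a ∉ s) :
    ((insert a s).filter P).card = (s.filter P).card + if P a then 1 else 0 := by
  simp only [Finset.card_filter, Finset.sum_insert ha, add_comm]

section

variable {i j : Fin m → Fin (n+1)} {S : Finset (Fin m)} {v : Fin m}

lemma imin_eq_of_isLeast (hi : Monotone i) (hv : IsLeast (S : Set (Fin m)) v) :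
    imin i S = i v :=
  le_antisymm (Finset.inf_le hv.1) (Finset.le_inf fun _ hl => hi (hv.2 hl))

lemma mink_eq_of_isLeast (hi : Monotone i) (hv : IsLeast (S : Set (Fin m)) v) {r : Fin m}
    (hr : r ∉ S) : mink i S r = i (min v r) := by
  refine imin_eq_of_isLeast hi ⟨?_, fun l hl => ?_⟩
  · rcases le_total v r with h | h
    · simp [min_eq_left h, hv.1]
    · simp [min_eq_right h, hr]
  · simp only [Finset.coe_union, Finset.coe_filter, Set.mem_union, Finset.mem_coe,
      Set.mem_ofPred_eq, Finset.mem_compl] at hl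
    rcases hl with hl | hl
    · exact min_le_of_left_le (hv.2 hl)
    · exact min_le_of_right_le hl.2

lemma NI_apply_eq_card_lt (hi : StrictMono i) (r : Fin m) :
    NI i S (i r) = (S.filter (· < r)).card + if r ∈ S then 1 else 0 := by
  simp_rw [NI, hi.le_iff_le, le_iff_lt_or_eq, Finset.filter_or]
  rw [Finset.card_union_of_disjoint
    (Finset.disjoint_filter.2 fun _ _ hlt heq => (hlt : _ < r).ne heq), Finset.filter_eq']
  split_ifs <;> simp

lemma wgt_sub_wgt (a : Fin (n+1) → ℕ) (hi : Function.Injective i) {U : Finset (Fin m)}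
    (hUS : U ⊆ S) (k : Fin (n+1)) :
    wgt i a U k - wgt i a S k = if k ∈ (S \ U).image i then (a k : ℤ) else 0 := by
  rw [Finset.image_sdiff _ _ hi]
  unfold wgt
  split_ifs <;> grind [Finset.image_subset_image hUS]

lemma Lstar_sub_Lstar_self (a : Fin (n+1) → ℕ) (hi : Function.Injective i)
    {U : Finset (Fin m)} (hUS : U ⊆ S) :
    Lstar i j a S U - Lstar i j a S S
      = ∑ l ∈ S \ U, ((NI i S (i l) : ℤ) - NJp i j S (i l)) * a (i l) := by
  have hlow : (S \ U).image i ⊆ Finset.univ.filter (imin i S ≤ ·) := by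
    intro k hk
    obtain ⟨l, hl, rfl⟩ := Finset.mem_image.1 hk
    exact Finset.mem_filter.2 ⟨Finset.mem_univ _, Finset.inf_le (Finset.mem_sdiff.1 hl).1⟩
  calc Lstar i j a S U - Lstar i j a S S
      = ∑ k ∈ Finset.univ.filter (imin i S ≤ ·),
          ((NI i S k : ℤ) - NJp i j S k) * (wgt i a U k - wgt i a S k) := by
        simp only [Lstar, mul_sub, Finset.sum_sub_distrib]; ring
    _ = _ := by
        simp_rw [wgt_sub_wgt a hi hUS, mul_ite, mul_zero]
        rw [Finset.sum_ite_mem, Finset.inter_eq_right.2 hlow, Finset.sum_image hi.injOn]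

def chainCoeff (i j : Fin m → Fin (n+1)) (v : Fin m) (S : Finset (Fin m)) (r : Fin m) : ℤ :=
  ((S.filter (· < r)).card : ℤ)
    - (((insert r S).filter fun l => i (min v r) < j l ∧ j l ≤ i r).card : ℤ)

lemma chainCoeff_of_notMem (hi : StrictMono i) (hv : IsLeast (S : Set (Fin m)) v) {r : Fin m}
    (hr : r ∉ S) :
    chainCoeff i j v S r = (NI i S (i r) : ℤ)
      - (((insert r S).filter fun l => mink i S r < j l ∧ j l ≤ i r).card : ℤ) := by
  rw [chainCoeff, NI_apply_eq_card_lt hi, if_neg hr, mink_eq_of_isLeast hi.monotone hv hr,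
    add_zero]

lemma chainCoeff_of_mem (hi : StrictMono i) (hv : IsLeast (S : Set (Fin m)) v) {r : Fin m}
    (hr : r ∈ S) :
    chainCoeff i j v S r = (NI i S (i r) : ℤ) - NJp i j S (i r) - 1 := by
  rw [chainCoeff, NI_apply_eq_card_lt hi, if_pos hr, NJp, imin_eq_of_isLeast hi.monotone hv,
    Finset.insert_eq_of_mem hr, min_eq_left (hv.2 hr)]
  push_cast
  ring

lemma Cfun_add_Lstar_eq (a : Fin (n+1) → ℕ) (hi : StrictMono i)
    (hv : IsLeast (S : Set (Fin m)) v) {U : Finset (Fin m)} (hUS : U ⊆ S) :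
    Cfun i j a S + Lstar i j a S U
      = 1 + ∑ k, (a k : ℤ) - ∑ l ∈ U, (a (i l) : ℤ)
        + ∑ r ∈ Uᶜ, chainCoeff i j v S r * a (i r) := by
  have hin : ∑ l ∈ S \ U, chainCoeff i j v S l * a (i l)
      = ∑ l ∈ S \ U, ((NI i S (i l) : ℤ) - NJp i j S (i l)) * a (i l)
        - ∑ l ∈ S \ U, (a (i l) : ℤ) := by
    rw [← Finset.sum_sub_distrib]
    refine Finset.sum_congr rfl fun l hl => ?_
    rw [chainCoeff_of_mem hi hv (Finset.mem_sdiff.1 hl).1]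
    ring
  have hout : ∑ r ∈ Sᶜ, chainCoeff i j v S r * a (i r)
      = ∑ r ∈ Sᶜ, ((NI i S (i r) : ℤ)
        - (((insert r S).filter fun l => mink i S r < j l ∧ j l ≤ i r).card : ℤ)) * a (i r) :=
    Finset.sum_congr rfl fun r hr => by
      rw [chainCoeff_of_notMem hi hv (Finset.mem_compl.1 hr)]
  unfold Cfun
  rw [← Finset.sum_sdiff (Finset.compl_subset_compl.2 hUS), compl_sdiff_compl,
    ← Finset.sum_sdiff hUS (f := fun l => (a (i l) : ℤ))]
  linear_combination Lstar_sub_Lstar_self a hi.injective hUS - hin - hout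

lemma chainCoeff_insert_sub {p : Fin m} (hp : p ∉ S) (r : Fin m) :
    chainCoeff i j v (insert p S) r - chainCoeff i j v S r
      = if r = p then 0
        else (if p < r then 1 else 0) - (if i (min v r) < j p ∧ j p ≤ i r then 1 else 0) := by
  by_cases hrp : r = p
  · subst hrp
    simp [chainCoeff, Finset.filter_insert]
  · have hp' : p ∉ insert r S := by simp [hp, Ne.symm hrp]
    rw [if_neg hrp, chainCoeff, chainCoeff, Finset.insert_comm, card_filter_insert_of_notMem _ hp,
      card_filter_insert_of_notMem _ hp']
    push_cast
    ring

lemma gfun_eq_sum_chainCoeff_sub (a : Fin (n+1) → ℕ) (hij : ∀ k l, i k ≠ j l)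
    {U : Finset (Fin m)} {p : Fin m} (hp : p ∉ S) (hvp : v ≤ p) :
    gfun i j a U v p
      = ∑ r ∈ Uᶜ, (chainCoeff i j v (insert p S) r - chainCoeff i j v S r) * a (i r) := by
  unfold gfun
  rw [Finset.sum_filter, Finset.sum_filter, ← Finset.sum_neg_distrib, ← Finset.sum_add_distrib]
  refine Finset.sum_congr rfl fun r _ => ?_
  rw [chainCoeff_insert_sub hp]
  -- `j p ≤ i r` is strict as `I ∩ J = ∅`, and for `r < v` the window `(i r, i r]` is empty.
  simp only [(hij r p).symm.le_iff_lt]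
  split_ifs <;> grind

end

/-- `i` enumerates `I`, `j` enumerates `J`; `S` indexes `I_l`, `v` indexes `i_v = min I_l`,
and `p` is the index `t_s`. -/
theorem lem_subtract_general (i j : Fin m → Fin (n+1)) (hi : StrictMono i)
    (hij : ∀ k l, i k ≠ j l) (a : Fin (n+1) → ℕ)
    (S U : Finset (Fin m)) (hUS : U ⊆ S)
    (v : Fin m) (hvS : v ∈ S) (hv : ∀ l ∈ S, v ≤ l)
    (p : Fin m) (hpS : p ∈ S) (hpU : p ∉ U) (hpv : p ≠ v) :
    (Cfun i j a S + Lstar i j a S U)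
      - (Cfun i j a (S.erase p) + Lstar i j a (S.erase p) U)
    = gfun i j a U v p := by
  have hleast : IsLeast (S : Set (Fin m)) v := ⟨hvS, hv⟩
  have hleast' : IsLeast (S.erase p : Set (Fin m)) v :=
    ⟨Finset.mem_erase.2 ⟨hpv.symm, hvS⟩, fun l hl => hv l (Finset.mem_of_mem_erase hl)⟩
  have hUS' : U ⊆ S.erase p := fun l hl =>
    Finset.mem_erase.2 ⟨ne_of_mem_of_not_mem hl hpU, hUS hl⟩
  rw [Cfun_add_Lstar_eq a hi hleast hUS, Cfun_add_Lstar_eq a hi hleast' hUS',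
    gfun_eq_sum_chainCoeff_sub a hij (S.notMem_erase p) (hv p hpS), Finset.insert_erase hpS]
  simp only [sub_mul, Finset.sum_sub_distrib]
  ring

/-- Lemma 4.1 ('lem-subtract').  `i` enumerates `I = {i_1 < ⋯ < i_m}`,
`j` the multi-set `J = {j_1 ≤ ⋯ ≤ j_m}` with `I ∩ J = ∅`; `S` indexes
`I_l ⊆ I`, `U ⊆ I_l`, `v` indexes `i_v = min I_l`, and `p` indexes an
element `i_{t_s} ∈ I_l` with `i_{t_s} ∉ U ∪ {i_v}`. -/
theorem lem_subtract (i j : Fin m → Fin (n+1)) (hi : StrictMono i)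
    (hj : Monotone j) (hij : ∀ k l, i k ≠ j l) (a : Fin (n+1) → ℕ)
    (S U : Finset (Fin m)) (hUS : U ⊆ S)
    (v : Fin m) (hvS : v ∈ S) (hv : ∀ l ∈ S, v ≤ l)
    (p : Fin m) (hpS : p ∈ S) (hpU : p ∉ U) (hpv : p ≠ v) :
    (Cfun i j a S + Lstar i j a S U)
      - (Cfun i j a (S.erase p) + Lstar i j a (S.erase p) U)
    = gfun i j a U v p :=
  lem_subtract_general i j hi hij a S U hUS v hvS hv p hpS hpU hpv
end
end

section
/- With the hypotheses and notation of the factorization lemma, assume additionally that there are no indices s < t < u in {1,...,m} with j_t < i_s < j_u < i_t. Then whenever I \ U \ {i_1,...,i_v} ≠ ∅, the product ∏_{i_{t_s} ∈ I \ U \ {i_1,...,i_v}} (1 - q^{g(i_{t_s})}) equals 0; equivalently, some g(i_{t_s}) = 0. -/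
open Finsupp
noncomputable section
variable {n m : ℕ}

def qq : RatFunc ℚ := RatFunc.X

/-!
Call `p ∉ U` with `v < p` *good* if `χ(i_{p'} > j_p > i_v)` holds for every later `p' ∉ U`; the
largest such `p` is vacuously good. For the smallest good `p` every term of `g(i_p)` vanishes:
the positive sum because all its indicators are `1`, the negative one because an indicator
`χ(i_{p'} > j_p > i_v)` with `v < p' < p` would make `p'` good as well, `j_{p'} < i_v` being
excluded by the absence of crossings `j_{p'} < i_v < j_p < i_{p'}`.
-/

/-- `χ(i_{p'} > j_p > i_v)` in the definition of `g`. -/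
def Chi (i j : Fin m → Fin (n + 1)) (v p p' : Fin m) : Prop :=
  i v < j p ∧ j p < i p'

def NoCrossing (i j : Fin m → Fin (n + 1)) : Prop :=
  ∀ s t u : Fin m, s < t → t < u → ¬(j t < i s ∧ i s < j u ∧ j u < i t)

theorem gfun_eq_zero {i j : Fin m → Fin (n + 1)} (a : Fin (n + 1) → ℕ) {U : Finset (Fin m)}
    {v p : Fin m} (hbelow : ∀ p' ∈ Uᶜ, v ≤ p' → p' < p → ¬Chi i j v p p')
    (habove : ∀ p' ∈ Uᶜ, p < p' → Chi i j v p p') :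
    gfun i j a U v p = 0 := by
  have hneg : (∑ p' ∈ Uᶜ.filter fun p' => v ≤ p' ∧ p' < p,
      if i v < j p ∧ j p < i p' then (a (i p') : ℤ) else 0) = 0 := by
    refine Finset.sum_eq_zero fun p' hp' => ?_
    obtain ⟨hp'U, hvp', hp'p⟩ := Finset.mem_filter.mp hp'
    exact if_neg (hbelow p' hp'U hvp' hp'p)
  have hpos : (∑ p' ∈ Uᶜ.filter fun p' => p < p',
      ((1 : ℤ) - if i v < j p ∧ j p < i p' then 1 else 0) * (a (i p') : ℤ)) = 0 := by
    refine Finset.sum_eq_zero fun p' hp' => ?_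
    obtain ⟨hp'U, hpp'⟩ := Finset.mem_filter.mp hp'
    have hchi : i v < j p ∧ j p < i p' := habove p' hp'U hpp'
    rw [if_pos hchi, sub_self, zero_mul]
  rw [gfun, hneg, hpos, neg_zero, add_zero]

theorem Chi.of_lt {i j : Fin m → Fin (n + 1)} (hi : StrictMono i) (hj : Monotone j)
    (hij : ∀ k l, i k ≠ j l) (hcross : NoCrossing i j) {v p p' p'' : Fin m}
    (hvp' : v < p') (hp'p : p' < p) (h : Chi i j v p p') (hp'p'' : p' < p'') :
    Chi i j v p' p'' := by
  obtain ⟨hvp, hpp'⟩ := h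
  have hj' : j p' < i p' := (hj hp'p.le).trans_lt hpp'
  refine ⟨?_, hj'.trans (hi hp'p'')⟩
  exact (hij v p').lt_or_gt.resolve_right fun hlt => hcross v p' p hvp' hp'p ⟨hlt, hvp, hpp'⟩

theorem exists_gfun_eq_zero {i j : Fin m → Fin (n + 1)} (hi : StrictMono i) (hj : Monotone j)
    (hij : ∀ k l, i k ≠ j l) (a : Fin (n + 1) → ℕ) (hcross : NoCrossing i j)
    {U : Finset (Fin m)} {v : Fin m} (hne : (Uᶜ.filter (fun p => v < p)).Nonempty) :
    ∃ p ∈ Uᶜ.filter (fun p => v < p), gfun i j a U v p = 0 := by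
  classical
  set T := Uᶜ.filter (fun p => v < p)
  set good := T.filter fun p => ∀ p' ∈ Uᶜ, p < p' → Chi i j v p p'
  have hmax : T.max' hne ∈ good := by
    have hvmax : v < T.max' hne := (Finset.mem_filter.mp (T.max'_mem hne)).2
    refine Finset.mem_filter.mpr ⟨T.max'_mem hne, fun p' hp'U hlt => ?_⟩
    exact absurd (T.le_max' p' (Finset.mem_filter.mpr ⟨hp'U, hvmax.trans hlt⟩)) hlt.not_ge
  have hgood : good.Nonempty := ⟨_, hmax⟩
  obtain ⟨hpT, habove⟩ := Finset.mem_filter.mp (good.min'_mem hgood)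
  refine ⟨good.min' hgood, hpT, gfun_eq_zero a ?_ habove⟩
  rintro p' hp'U hvp' hp'p hchi
  rcases hvp'.eq_or_lt with rfl | hvp'
  · exact lt_asymm hchi.1 hchi.2
  · have hp'good : p' ∈ good := Finset.mem_filter.mpr ⟨Finset.mem_filter.mpr ⟨hp'U, hvp'⟩,
      fun p'' _ hlt => hchi.of_lt hi hj hij hcross hvp' hp'p hlt⟩
    exact (good.min'_le p' hp'good).not_gt hp'p

theorem lem_factor_cancel_general (i j : Fin m → Fin (n+1)) (hi : StrictMono i)
    (hj : Monotone j) (hij : ∀ k l, i k ≠ j l) (a : Fin (n+1) → ℕ)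
    (hcross : ∀ s t u : Fin m, s < t → t < u →
      ¬(j t < i s ∧ i s < j u ∧ j u < i t))
    (U : Finset (Fin m))
    (v : Fin m)
    (hne : (Uᶜ.filter (fun p => v < p)).Nonempty) :
    (∏ p ∈ Uᶜ.filter (fun p => v < p), (1 - qq ^ gfun i j a U v p)) = 0 ∧
    ∃ p ∈ Uᶜ.filter (fun p => v < p), gfun i j a U v p = 0 := by
  obtain ⟨p, hp, hg⟩ := exists_gfun_eq_zero hi hj hij a hcross hne
  refine ⟨Finset.prod_eq_zero hp ?_, p, hp, hg⟩
  rw [hg, zpow_zero, sub_self]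

/-- The cancelation part of Lemma 4.3: under the no-crossing hypothesis on
`(I,J)`, if `I \ U \ {i_1,…,i_v} ≠ ∅` then the product
`∏ (1 - q^{g(i_{t_s})})` vanishes; equivalently some `g(i_{t_s}) = 0`. -/
theorem lem_factor_cancel (i j : Fin m → Fin (n+1)) (hi : StrictMono i)
    (hj : Monotone j) (hij : ∀ k l, i k ≠ j l) (a : Fin (n+1) → ℕ)
    (hcross : ∀ s t u : Fin m, s < t → t < u →
      ¬(j t < i s ∧ i s < j u ∧ j u < i t))
    (U : Finset (Fin m)) (hU : U.Nonempty) (hUne : U ≠ Finset.univ)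
    (v : Fin m) (hv : ∀ l ∈ U, v ≤ l)
    (hne : (Uᶜ.filter (fun p => v < p)).Nonempty) :
    (∏ p ∈ Uᶜ.filter (fun p => v < p), (1 - qq ^ gfun i j a U v p)) = 0 ∧
    ∃ p ∈ Uᶜ.filter (fun p => v < p), gfun i j a U v p = 0 :=
  lem_factor_cancel_general i j hi hj hij a hcross U v hne
end
end

section
/- If U = {i_h, i_{h+1}, ..., i_m} is a 'tail' subset of I = {i_1 < ⋯ < i_m} with h ≥ 2, then q^{C(U) + L*(U|U)} = q^{C(U ∪ {i_{h-1}}) + L*(U | U ∪ {i_{h-1}})}; in fact both exponents equal 1 + a - Σ_{k ∈ U} a_k. -/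
open Finsupp
noncomputable section
variable {n m : ℕ}

/-!
For a tail `U = {i_h, …, i_m}` every index `r` outside `U` lies below all of `U`. Hence in the
correction sum of `C(U)` both counts vanish: `N(i_r, U) = 0`, and `min 𝕀_r = i_r`, so no `j`
lies in `(min 𝕀_r, i_r]`. This leaves `C(U) + L*(U|U) = 1 + a - ∑_{k ∈ U} a_k` for every tail.
For `U' = U ∪ {i_{h-1}}`, the weights of `L*(U|U')` and `L*(U'|U')` differ only at
`k = i_{h-1} = min U'`, where `N(k, U') - N(k, J⁺_{U'}) = 1 - 0`; so `L*(U|U') = L*(U'|U') + a_{i_{h-1}}`,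
which is exactly absorbed by the extra term `a_{i_{h-1}}` in `∑_{k ∈ U'} a_k`.
-/

open Finset

lemma imin_Ici {i : Fin m → Fin (n+1)} (hi : Monotone i) (r : Fin m) :
    imin i (Ici r) = i r :=
  le_antisymm (Finset.inf_le (mem_Ici.mpr le_rfl)) (Finset.le_inf fun _ hl => hi (mem_Ici.mp hl))

lemma Ici_union_filter_compl_Ici {α : Type*} [LinearOrder α] [Fintype α]
    [LocallyFiniteOrderTop α] {r h : α} (hr : r ≤ h) :
    Ici h ∪ (Ici h)ᶜ.filter (fun r' => r ≤ r') = Ici r := by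
  ext x
  simp only [mem_union, mem_filter, mem_compl, mem_Ici]
  constructor
  · rintro (hx | ⟨_, hx⟩)
    exacts [hr.trans hx, hx]
  · intro hx
    by_cases hxh : h ≤ x
    exacts [Or.inl hxh, Or.inr ⟨hxh, hx⟩]

lemma NI_Ici_of_lt {i : Fin m → Fin (n+1)} (hi : StrictMono i) {r h : Fin m} (hrh : r < h) :
    NI i (Ici h) (i r) = 0 := by
  rw [NI, card_eq_zero, filter_eq_empty_iff]
  exact fun l hl => not_le.mpr (hi (hrh.trans_le (mem_Ici.mp hl)))

lemma mink_Ici {i : Fin m → Fin (n+1)} (hi : Monotone i) {r h : Fin m} (hrh : r ≤ h) :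
    mink i (Ici h) r = i r := by
  rw [mink, Ici_union_filter_compl_Ici hrh, imin_Ici hi]

lemma Cfun_Ici_add_Lstar (i j : Fin m → Fin (n+1)) (hi : StrictMono i) (a : Fin (n+1) → ℕ)
    (h : Fin m) :
    Cfun i j a (Ici h) + Lstar i j a (Ici h) (Ici h)
      = 1 + (∑ k, (a k : ℤ)) - ∑ l ∈ Ici h, (a (i l) : ℤ) := by
  have hcorr : ∑ r ∈ (Ici h)ᶜ, ((NI i (Ici h) (i r) : ℤ) -
      (((insert r (Ici h)).filter fun l => mink i (Ici h) r < j l ∧ j l ≤ i r).card : ℤ))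
      * (a (i r) : ℤ) = 0 := by
    refine sum_eq_zero fun r hr => ?_
    have hrh : r < h := by simpa using hr
    have hempty : ((insert r (Ici h)).filter fun l => mink i (Ici h) r < j l ∧ j l ≤ i r) = ∅ := by
      rw [mink_Ici hi.monotone hrh.le, filter_eq_empty_iff]
      exact fun _ _ hl => lt_irrefl _ (hl.1.trans_le hl.2)
    simp [NI_Ici_of_lt hi hrh, hempty]
  rw [Cfun, hcorr]
  ring

lemma wgt_erase {i : Fin m → Fin (n+1)} (hi : Function.Injective i) (a : Fin (n+1) → ℕ)
    {T : Finset (Fin m)} {p : Fin m} (hp : p ∈ T) (k : Fin (n+1)) :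
    wgt i a (T.erase p) k = wgt i a T k + if k = i p then (a (i p) : ℤ) else 0 := by
  have himage : T.image i = insert (i p) ((T.erase p).image i) := by
    rw [← image_insert, insert_erase hp]
  have hnot : i p ∉ (T.erase p).image i := by
    simp [hi.eq_iff]
  by_cases hk : k = i p
  · rw [hk, wgt, wgt, if_neg hnot, if_pos (mem_image_of_mem i hp), if_pos rfl, zero_add]
  · simp [wgt, himage, hk]

lemma Lstar_erase (i j : Fin m → Fin (n+1)) (hi : Function.Injective i) (a : Fin (n+1) → ℕ)
    (S : Finset (Fin m)) {T : Finset (Fin m)} {p : Fin m} (hp : p ∈ T) (hpS : imin i S ≤ i p) :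
    Lstar i j a S (T.erase p)
      = Lstar i j a S T + ((NI i S (i p) : ℤ) - (NJp i j S (i p) : ℤ)) * (a (i p) : ℤ) := by
  simp only [Lstar, wgt_erase hi a hp, mul_add, sum_add_distrib, mul_ite, mul_zero]
  rw [Finset.sum_ite_eq', if_pos (mem_filter.mpr ⟨mem_univ _, hpS⟩)]
  ring

lemma NI_Ici_self {i : Fin m → Fin (n+1)} (hi : StrictMono i) (p : Fin m) :
    NI i (Ici p) (i p) = 1 := by
  rw [NI, card_eq_one]
  refine ⟨p, ?_⟩
  ext l
  simp only [mem_filter, mem_Ici, mem_singleton, hi.le_iff_le]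
  exact ⟨fun hl => le_antisymm hl.2 hl.1, fun hl => ⟨hl.ge, hl.le⟩⟩

lemma NJp_Ici_self (i j : Fin m → Fin (n+1)) (hi : Monotone i) (p : Fin m) :
    NJp i j (Ici p) (i p) = 0 := by
  rw [NJp, card_eq_zero, filter_eq_empty_iff, imin_Ici hi]
  exact fun _ _ hl => lt_irrefl _ (hl.1.trans_le hl.2)

theorem lem_cancel_general (i j : Fin m → Fin (n+1)) (hi : StrictMono i)
    (a : Fin (n+1) → ℕ)
    (h p : Fin m) (hph : (p : ℕ) + 1 = (h : ℕ)) :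
    Cfun i j a (Finset.Ici h) + Lstar i j a (Finset.Ici h) (Finset.Ici h)
      = 1 + (∑ k, (a k : ℤ)) - ∑ l ∈ Finset.Ici h, (a (i l) : ℤ) ∧
    Cfun i j a (Finset.Ici p) + Lstar i j a (Finset.Ici p) (Finset.Ici h)
      = 1 + (∑ k, (a k : ℤ)) - ∑ l ∈ Finset.Ici h, (a (i l) : ℤ) := by
  refine ⟨Cfun_Ici_add_Lstar i j hi a h, ?_⟩
  have hU : Ici h = (Ici p).erase p := by
    ext x
    simp only [mem_erase, mem_Ici, Fin.le_def, ne_eq, Fin.ext_iff]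
    omega
  have hp : p ∈ Ici p := mem_Ici.mpr le_rfl
  have hLstar : Lstar i j a (Ici p) (Ici h) = Lstar i j a (Ici p) (Ici p) + a (i p) := by
    rw [hU, Lstar_erase i j hi.injective a _ hp (imin_Ici hi.monotone p).le,
      NI_Ici_self hi, NJp_Ici_self i j hi.monotone]
    ring
  have hsum := add_sum_erase (Ici p) (fun l => (a (i l) : ℤ)) hp
  rw [← hU] at hsum
  linarith [Cfun_Ici_add_Lstar i j hi a p]

/-- Lemma 4.4 ('lem-cancel'): for a tail subset `U = {i_h, …, i_m}` (with
`h ≥ 2`, i.e. `U ∪ {i_{h-1}} ⊆ I`), both exponents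
`C(U) + L*(U|U)` and `C(U ∪ {i_{h-1}}) + L*(U | U ∪ {i_{h-1}})` are equal
to `1 + a - ∑_{k ∈ U} a_k`; in particular
`q^{C(U)+L*(U|U)} = q^{C(U ∪ {i_{h-1}}) + L*(U|U ∪ {i_{h-1}})}`.
Here `h, p : Fin m` with `p + 1 = h`, so `U = Ici h` and
`U ∪ {i_{h-1}} = Ici p`. -/
theorem lem_cancel (i j : Fin m → Fin (n+1)) (hi : StrictMono i)
    (hj : Monotone j) (hij : ∀ k l, i k ≠ j l) (a : Fin (n+1) → ℕ)
    (h p : Fin m) (hph : (p : ℕ) + 1 = (h : ℕ)) :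
    Cfun i j a (Finset.Ici h) + Lstar i j a (Finset.Ici h) (Finset.Ici h)
      = 1 + (∑ k, (a k : ℤ)) - ∑ l ∈ Finset.Ici h, (a (i l) : ℤ) ∧
    Cfun i j a (Finset.Ici p) + Lstar i j a (Finset.Ici p) (Finset.Ici h)
      = 1 + (∑ k, (a k : ℤ)) - ∑ l ∈ Finset.Ici h, (a (i l) : ℤ) :=
  lem_cancel_general i j hi a h p hph
end
end

section
/- Let I ⊆ {0,...,n} be nonempty with Σ_{k ∈ I} a_k ≤ a, where a = a_0 + ⋯ + a_n and the a_i are nonnegative integers. Then (1 + a - Σ_{k∈I} a_k) · [1 + Σ_{l=1}^{|I|} (-1)^l Σ_{∅ ≠ I_l ⊆ I, |I_l|=l} Σ_{∅ ≠ T ⊆ I_l} (-1)^{|T|} (Σ_{k∈T} a_k)/(1 + a - Σ_{k∈T} a_k)] = 1 + a. Equivalently, after interchanging summations and applying the alternating binomial identity, the bracketed quantity equals 1 + (Σ_{k∈I} a_k)/(1 + a - Σ_{k∈I} a_k). -/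
open Finset

lemma kadell_pow_sum {ι : Type*} [DecidableEq ι] (x : Finset ι) :
    (∑ m ∈ x.powerset, (-1 : ℚ) ^ m.card) = if x = ∅ then 1 else 0 := by
  have h := Finset.sum_powerset_neg_one_pow_card (x := x)
  have h2 : ((∑ m ∈ x.powerset, (-1 : ℤ) ^ m.card : ℤ) : ℚ)
      = ((if x = ∅ then 1 else 0 : ℤ) : ℚ) := by rw [h]
  push_cast at h2
  rw [← h2]

lemma kadell_inner {ι : Type*} [DecidableEq ι] (I T : Finset ι) (hT : T ⊆ I) :
    ∑ Il ∈ I.powerset.filter (fun Il => T ⊆ Il), (-1 : ℚ) ^ Il.card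
      = (-1 : ℚ) ^ T.card * (if T = I then 1 else 0) := by
  have h : ∑ Il ∈ I.powerset.filter (fun Il => T ⊆ Il), (-1 : ℚ) ^ Il.card
      = ∑ U ∈ (I \ T).powerset, (-1 : ℚ) ^ (U ∪ T).card := by
    refine Finset.sum_nbij' (fun Il => Il \ T) (fun U => U ∪ T) ?_ ?_ ?_ ?_ ?_
    · intro Il hIl
      simp only [mem_filter, mem_powerset] at hIl
      exact mem_powerset.2 (sdiff_subset_sdiff hIl.1 le_rfl)
    · intro U hU
      simp only [mem_powerset] at hU
      refine mem_filter.2 ⟨mem_powerset.2 (union_subset (hU.trans (sdiff_subset)) hT),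
        subset_union_right⟩
    · intro Il hIl
      simp only [mem_filter, mem_powerset] at hIl
      exact sdiff_union_of_subset hIl.2
    · intro U hU
      simp only [mem_powerset] at hU
      exact union_sdiff_cancel_right
        (Finset.disjoint_left.2 fun x hx => (mem_sdiff.1 (hU hx)).2)
    · intro Il hIl
      simp only [mem_filter, mem_powerset] at hIl
      rw [sdiff_union_of_subset hIl.2]
  rw [h]
  have h2 : ∀ U ∈ (I \ T).powerset, (-1 : ℚ) ^ (U ∪ T).card
      = (-1 : ℚ) ^ T.card * (-1 : ℚ) ^ U.card := by
    intro U hU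
    simp only [mem_powerset] at hU
    have hd : Disjoint U T := Finset.disjoint_left.2 fun x hx => (mem_sdiff.1 (hU hx)).2
    rw [card_union_of_disjoint hd, pow_add, mul_comm]
  rw [Finset.sum_congr rfl h2, ← mul_sum, kadell_pow_sum]
  congr 1
  simp only [Finset.sdiff_eq_empty_iff_subset]
  by_cases hTI : T = I
  · simp [hTI]
  · have hns : ¬ I ⊆ T := fun h => hTI (hT.antisymm h)
    simp [hTI, hns]

lemma kadell_key {ι : Type*} [DecidableEq ι] (I : Finset ι) (hI : I.Nonempty)
    (f : Finset ι → ℚ) :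
    ∑ Il ∈ I.powerset.filter (fun Il => Il ≠ ∅), (-1 : ℚ) ^ Il.card *
        ∑ T ∈ Il.powerset.filter (fun T => T ≠ ∅), (-1 : ℚ) ^ T.card * f T
      = f I := by
  set G : Finset ι → ℚ := fun T => if T = ∅ then 0 else (-1 : ℚ) ^ T.card * f T with hG
  have hinner : ∀ Il : Finset ι,
      (∑ T ∈ Il.powerset.filter (fun T => T ≠ ∅), (-1 : ℚ) ^ T.card * f T)
        = ∑ T ∈ Il.powerset, G T := by
    intro Il
    rw [Finset.sum_filter]
    refine Finset.sum_congr rfl fun T _ => ?_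
    by_cases h : T = ∅ <;> simp [hG, h]
  have h1 : ∑ Il ∈ I.powerset.filter (fun Il => Il ≠ ∅), (-1 : ℚ) ^ Il.card *
        ∑ T ∈ Il.powerset.filter (fun T => T ≠ ∅), (-1 : ℚ) ^ T.card * f T
      = ∑ Il ∈ I.powerset, ∑ T ∈ Il.powerset, (-1 : ℚ) ^ Il.card * G T := by
    rw [Finset.sum_filter]
    refine Finset.sum_congr rfl fun Il _ => ?_
    by_cases h : Il = ∅
    · simp [h, hG]
    · simp [h, hinner Il, Finset.mul_sum]
  rw [h1]
  have h2 : ∑ Il ∈ I.powerset, ∑ T ∈ Il.powerset, (-1 : ℚ) ^ Il.card * G T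
      = ∑ T ∈ I.powerset, ∑ Il ∈ I.powerset.filter (fun Il => T ⊆ Il),
          (-1 : ℚ) ^ Il.card * G T := by
    refine Finset.sum_comm' ?_
    intro Il T
    simp only [mem_powerset, mem_filter]
    constructor
    · rintro ⟨h1, h2⟩; exact ⟨⟨h1, h2⟩, h2.trans h1⟩
    · rintro ⟨⟨h1, h2⟩, _⟩; exact ⟨h1, h2⟩
  rw [h2]
  have h3 : ∀ T ∈ I.powerset, (∑ Il ∈ I.powerset.filter (fun Il => T ⊆ Il),
      (-1 : ℚ) ^ Il.card * G T)
        = if T = I then G T * (-1 : ℚ) ^ T.card else 0 := by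
    intro T hT
    rw [← Finset.sum_mul, kadell_inner I T (mem_powerset.1 hT)]
    by_cases hTI : T = I <;> simp [hTI, mul_comm]
  rw [Finset.sum_congr rfl h3, Finset.sum_ite_eq' I.powerset I
    (fun T => G T * (-1 : ℚ) ^ T.card), if_pos (mem_powerset_self I)]
  have : G I = (-1 : ℚ) ^ I.card * f I := by
    simp [hG, Finset.nonempty_iff_ne_empty.1 hI]
  rw [this]
  rw [mul_comm, ← mul_assoc, ← pow_add, ← two_mul, pow_mul]
  norm_num

/-- The rational-function identity at the heart of the proof of Kadell's
conjecture: for a nonempty `I ⊆ {0,…,n}` (so that `∑_{k∈I} a_k ≤ a`),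
summing the first-layer formula over all nonempty `I_l ⊆ I` leaves only the
`T = I` term, and the bracketed quantity equals
`1 + (∑_{k∈I} a_k)/(1 + a - ∑_{k∈I} a_k)`. -/
theorem kadell_cancelation (n : ℕ) (a : Fin (n+1) → ℕ)
    (I : Finset (Fin (n+1))) (hI : I.Nonempty)
    (hle : ∑ k ∈ I, a k ≤ ∑ k, a k) :
    ((1 + ∑ k, a k : ℚ) - ∑ k ∈ I, (a k : ℚ)) *
      (1 + ∑ Il ∈ I.powerset.filter (fun Il => Il ≠ ∅), (-1 : ℚ) ^ Il.card *
        ∑ T ∈ Il.powerset.filter (fun T => T ≠ ∅),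
          (-1 : ℚ) ^ T.card * (∑ k ∈ T, (a k : ℚ)) /
            ((1 + ∑ k, a k : ℚ) - ∑ k ∈ T, (a k : ℚ)))
      = 1 + ∑ k, a k ∧
    (1 + ∑ Il ∈ I.powerset.filter (fun Il => Il ≠ ∅), (-1 : ℚ) ^ Il.card *
        ∑ T ∈ Il.powerset.filter (fun T => T ≠ ∅),
          (-1 : ℚ) ^ T.card * (∑ k ∈ T, (a k : ℚ)) /
            ((1 + ∑ k, a k : ℚ) - ∑ k ∈ T, (a k : ℚ)))
      = 1 + (∑ k ∈ I, (a k : ℚ)) /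
          ((1 + ∑ k, a k : ℚ) - ∑ k ∈ I, (a k : ℚ)) := by
  have key := kadell_key I hI
      (fun T => (∑ k ∈ T, (a k : ℚ)) / ((1 + ∑ k, a k : ℚ) - ∑ k ∈ T, (a k : ℚ)))
  have hkey : ∑ Il ∈ I.powerset.filter (fun Il => Il ≠ ∅), (-1 : ℚ) ^ Il.card *
        ∑ T ∈ Il.powerset.filter (fun T => T ≠ ∅),
          (-1 : ℚ) ^ T.card * (∑ k ∈ T, (a k : ℚ)) /
            ((1 + ∑ k, a k : ℚ) - ∑ k ∈ T, (a k : ℚ))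
      = (∑ k ∈ I, (a k : ℚ)) / ((1 + ∑ k, a k : ℚ) - ∑ k ∈ I, (a k : ℚ)) := by
    rw [← key]
    refine Finset.sum_congr rfl fun Il _ => ?_
    congr 1
    refine Finset.sum_congr rfl fun T _ => ?_
    ring
  have hD : ((1 + ∑ k, a k : ℚ) - ∑ k ∈ I, (a k : ℚ)) ≠ 0 := by
    have : (∑ k ∈ I, (a k : ℚ)) ≤ ∑ k, (a k : ℚ) := by exact_mod_cast hle
    push_cast
    linarith
  constructor
  · rw [hkey, mul_add, mul_one, mul_div_cancel₀ _ hD]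
    ring
  · rw [hkey]
end
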